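/- A 2-CNF formula F is satisfiable if and only if no variable ξ has both directed paths ξ ⇝ ¬ξ and ¬ξ ⇝ ξ in the implication digraph D_F (i.e., no literal lies on a contradictory cycle). -/

import Mathlib

/-- A literal on `n` boolean variables: a variable together with a sign. -/
abbrev Lit (n : ℕ) := Fin n × Bool

/-- Negation of a literal. -/
def Lit.negate {n : ℕ} (x : Lit n) : Lit n := (x.1, !x.2)

/-- The assignment `a` sets the literal `x` true. -/
def SetsTrue {n : ℕ} (a : Fin n → Bool) (x : Lit n) : Prop := a x.1 = x.2

/-- A 2-CNF formula given as a finite set of incompatibilities `(x, y)`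
(each representing the clause `¬x ∨ ¬y`): `a` satisfies the formula iff no
incompatible pair of literals is simultaneously set true. -/
def Satisfies {n : ℕ} (F : Finset (Lit n × Lit n)) (a : Fin n → Bool) : Prop :=
  ∀ q ∈ F, ¬(SetsTrue a q.1 ∧ SetsTrue a q.2)

/-- Each incompatibility involves literals on two distinct variables. -/
def ProperPairs {n : ℕ} (F : Finset (Lit n × Lit n)) : Prop :=
  ∀ q ∈ F, q.1.1 ≠ q.2.1

/-- Edges of the implication digraph `D_F`: each incompatibility `(x, y)`
contributes the edges `x → ¬y` and `y → ¬x`. -/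
def Edge {n : ℕ} (F : Finset (Lit n × Lit n)) (x y : Lit n) : Prop :=
  (x, Lit.negate y) ∈ F ∨ (Lit.negate y, x) ∈ F

/-- Reachability `x ⇝ y` in the implication digraph (directed paths, possibly empty). -/
def Reach {n : ℕ} (F : Finset (Lit n × Lit n)) : Lit n → Lit n → Prop :=
  Relation.ReflTransGen (Edge F)

/-- The strong component of the literal `x` in `D_F`. -/
def StrongComp {n : ℕ} (F : Finset (Lit n × Lit n)) (x : Lit n) : Set (Lit n) :=
  {y | Reach F x y ∧ Reach F y x}

/-- The literal `x` lies in a splitting pair: its strong component is nontrivial and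
the components `C(x)` and `C(¬x)` are incomparable in the reachability order. -/
def SplittingPairAt {n : ℕ} (F : Finset (Lit n × Lit n)) (x : Lit n) : Prop :=
  (∃ y, y ≠ x ∧ y ∈ StrongComp F x) ∧
    ¬Reach F x (Lit.negate x) ∧ ¬Reach F (Lit.negate x) x

/-- The graph on satisfying assignments of `F`: vertices are satisfying assignments,
edges join assignments differing at exactly one variable (single-variable flips). -/
def SatGraph {n : ℕ} (F : Finset (Lit n × Lit n)) :
    SimpleGraph {a : Fin n → Bool // Satisfies F a} where
  Adj a b := ∃ i, a.1 i ≠ b.1 i ∧ ∀ j, j ≠ i → a.1 j = b.1 j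
  symm := by
    constructor
    rintro a b ⟨i, h1, h2⟩
    exact ⟨i, fun h => h1 h.symm, fun j hj => (h2 j hj).symm⟩
  loopless := by
    constructor
    rintro a ⟨i, h1, _⟩
    exact h1 rfl


section APT

variable {n : ℕ} (F : Finset (Lit n × Lit n))

@[simp] lemma Lit.negate_negate (x : Lit n) : Lit.negate (Lit.negate x) = x := by
  simp [Lit.negate]

lemma setsTrue_negate_iff (a : Fin n → Bool) (x : Lit n) :
    SetsTrue a (Lit.negate x) ↔ ¬ SetsTrue a x := by
  cases x with
  | mk i s => cases s <;> simp [SetsTrue, Lit.negate]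

lemma edge_preserves {a : Fin n → Bool} (ha : Satisfies F a) {x y : Lit n}
    (h : Edge F x y) (hx : SetsTrue a x) : SetsTrue a y := by
  by_contra hy
  rw [← setsTrue_negate_iff] at hy
  rcases h with h | h
  · exact ha _ h ⟨hx, hy⟩
  · exact ha _ h ⟨hy, hx⟩

lemma reach_preserves {a : Fin n → Bool} (ha : Satisfies F a) {x y : Lit n}
    (h : Reach F x y) (hx : SetsTrue a x) : SetsTrue a y := by
  induction h with
  | refl => exact hx
  | tail _ e ih => exact edge_preserves F ha e ih

/-- Type synonym carrying the reachability preorder. -/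
def LitPre (_F : Finset (Lit n × Lit n)) : Type := Lit n

instance : Preorder (LitPre F) where
  le := Reach F
  le_refl _ := Relation.ReflTransGen.refl
  le_trans _ _ _ h h' := Relation.ReflTransGen.trans h h'

/-- Monotone function into a linear order, injective on strong components. -/
noncomputable def litRank : Lit n → LinearExtension (Antisymmetrization (LitPre F) (· ≤ ·)) :=
  fun x => toLinearExtension (toAntisymmetrization (α := LitPre F) (· ≤ ·) x)

lemma litRank_mono {x y : Lit n} (h : Reach F x y) : litRank F x ≤ litRank F y :=
  toLinearExtension.monotone (toAntisymmetrization_mono (α := LitPre F) h)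

lemma litRank_eq {x y : Lit n} (h : litRank F x = litRank F y) :
    Reach F x y ∧ Reach F y x := by
  have h2 : toAntisymmetrization (α := LitPre F) (· ≤ ·) x
      = toAntisymmetrization (α := LitPre F) (· ≤ ·) y := h
  have := Quotient.exact h2
  exact ⟨this.1, this.2⟩

end APT


/-- **Aspvall–Plass–Tarjan.** A 2-CNF formula is satisfiable iff no literal lies on a
contradictory cycle, i.e. for no literal `x` do both paths `x ⇝ ¬x` and `¬x ⇝ x`
exist in the implication digraph. -/

theorem satisfiable_iff_no_contradictory_cycle {n : ℕ} (F : Finset (Lit n × Lit n))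
    (hF : ProperPairs F) :
    (∃ a, Satisfies F a) ↔
      ∀ x : Lit n, ¬(Reach F x (Lit.negate x) ∧ Reach F (Lit.negate x) x) := by
  constructor
  · rintro ⟨a, ha⟩ x ⟨h1, h2⟩
    by_cases hx : SetsTrue a x
    · have := reach_preserves F ha h1 hx
      rw [setsTrue_negate_iff] at this
      exact this hx
    · rw [← setsTrue_negate_iff] at hx
      exact (setsTrue_negate_iff a x).mp hx (reach_preserves F ha h2 hx)
  · intro hno
    have hne : ∀ x : Lit n, litRank F x ≠ litRank F (Lit.negate x) := by
      intro x h
      exact hno x ⟨(litRank_eq F h).1, (litRank_eq F h).2⟩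
    refine ⟨fun i => decide (litRank F (i, false) < litRank F (i, true)), ?_⟩
    rintro ⟨x, y⟩ hq ⟨hx, hy⟩
    -- each true literal has strictly larger rank than its negation
    have key : ∀ z : Lit n, SetsTrue (fun i => decide (litRank F (i, false) < litRank F (i, true))) z →
        litRank F (Lit.negate z) < litRank F z := by
      rintro ⟨i, s⟩ hz
      simp only [SetsTrue] at hz
      cases s
      · simp only [decide_eq_false_iff_not, not_lt] at hz
        exact lt_of_le_of_ne hz (hne (i, false)).symm
      · simpa [Lit.negate] using of_decide_eq_true hz
    have e1 : Reach F x (Lit.negate y) :=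
      Relation.ReflTransGen.single (Or.inl (by simpa using hq))
    have e2 : Reach F y (Lit.negate x) :=
      Relation.ReflTransGen.single (Or.inr (by simpa using hq))
    have c1 := litRank_mono F e1
    have c2 := litRank_mono F e2
    have k1 := key x hx
    have k2 := key y hy
    exact absurd (c1.trans_lt (k2.trans (c2.trans_lt k1))) (lt_irrefl _)
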